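/- arXiv:math/0312288 — 4 statements merged into one kernel-verified Lean document; each statement's English description precedes it below -/
import Mathlib

section
/- Let P : ℕ → ℕ be a sequence of primes and let k be a prime occurring infinitely often in P. Then h_P^k : Σ_P → Σ_P is a bijection (indeed a topological group automorphism of the compact group Σ_P). -/
/-- The `P`-adic solenoid: sequences on the unit circle with `z n = z (n+1) ^ P n`. -/
def Solenoid (P : ℕ → ℕ) : Set (ℕ → ℂ) :=
  {z | (∀ n, ‖z n‖ = 1) ∧ ∀ n, z n = z (n + 1) ^ P n}

/-- The coordinatewise `k`-th power map. -/
def hpow (k : ℕ) (z : ℕ → ℂ) : ℕ → ℂ := fun n => z n ^ k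

/-!
Telescoping the defining relation gives `z n = z m ^ ∏_{n ≤ i < m} P i`. When `P m = k` the
exponent up to `m + 1` contains the factor `k`, so `z n` is a power of `z (m + 1) ^ k`: this
makes `hpow k` injective, and `w (m + 1) ^ ∏_{n ≤ i < m} P i` is a `k`-th root of `w n`. Since
`k` recurs, such an `m` exists beyond every `n`, and these roots do not depend on the choice of
`m`, so they assemble into a point of the solenoid. Being a continuous bijection of a compact
Hausdorff space, `hpow k` is then a homeomorphism.
-/

open Finset

theorem Set.BijOn.exists_homeomorph {X Y : Type*} [TopologicalSpace X] [TopologicalSpace Y]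
    [T2Space Y] {f : X → Y} {s : Set X} {t : Set Y} (h : Set.BijOn f s t) (hs : IsCompact s)
    (hf : ContinuousOn f s) : ∃ e : s ≃ₜ t, ∀ x : s, (e x : Y) = f x := by
  have := isCompact_iff_compactSpace.mp hs
  exact ⟨(hf.mapsToRestrict h.mapsTo).homeoOfEquivCompactToT2 (f := h.equiv f), fun _ => rfl⟩

theorem hpow_mul (k : ℕ) (z w : ℕ → ℂ) : hpow k (z * w) = hpow k z * hpow k w :=
  funext fun n => mul_pow (z n) (w n) k

theorem continuous_hpow (k : ℕ) : Continuous (hpow k) :=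
  continuous_pi fun n => (continuous_apply n).pow k

namespace Solenoid

variable {P : ℕ → ℕ} {k : ℕ} {z w : ℕ → ℂ}

theorem isCompact (P : ℕ → ℕ) : IsCompact (Solenoid P) := by
  have hclosed : IsClosed (Solenoid P) := by
    simp only [Solenoid, Set.ofPred_and, Set.ofPred_forall]
    exact (isClosed_iInter fun n => isClosed_eq (by fun_prop) continuous_const).inter
      (isClosed_iInter fun n => isClosed_eq (continuous_apply n) (by fun_prop))
  exact (isCompact_univ_pi fun _ => isCompact_sphere (0 : ℂ) 1).of_isClosed_subset hclosed
    fun z hz n _ => mem_sphere_zero_iff_norm.2 (hz.1 n)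

theorem eq_pow_prod (hz : z ∈ Solenoid P) {n m : ℕ} (hnm : n ≤ m) :
    z n = z m ^ ∏ i ∈ Ico n m, P i := by
  induction m, hnm using Nat.le_induction with
  | base => simp
  | succ m hnm ih => rw [ih, hz.2 m, ← pow_mul, prod_Ico_succ_top hnm, mul_comm]

theorem eq_hpow_pow_prod (hz : z ∈ Solenoid P) {n m : ℕ} (hnm : n ≤ m) (hm : P m = k) :
    z n = hpow k z (m + 1) ^ ∏ i ∈ Ico n m, P i := by
  rw [eq_pow_prod hz (hnm.trans m.le_succ), prod_Ico_succ_top hnm, hm, mul_comm, pow_mul,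
    hpow]

theorem hpow_mapsTo (k : ℕ) : Set.MapsTo (hpow k) (Solenoid P) (Solenoid P) :=
  fun z hz => ⟨fun n => by simp [hpow, hz.1 n],
    fun n => by rw [hpow, hpow, hz.2 n, ← pow_mul, ← pow_mul, mul_comm]⟩

theorem hpow_injOn (hinf : {n | P n = k}.Infinite) : Set.InjOn (hpow k) (Solenoid P) := by
  intro z hz w hw h
  funext n
  obtain ⟨m, hm, hnm⟩ := hinf.exists_gt n
  rw [eq_hpow_pow_prod hz hnm.le hm, eq_hpow_pow_prod hw hnm.le hm, h]

/-- For `n ≤ m` and `P m = k`, a `k`-th root of `w n`. -/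
def rootAt (P : ℕ → ℕ) (w : ℕ → ℂ) (n m : ℕ) : ℂ :=
  w (m + 1) ^ ∏ i ∈ Ico n m, P i

theorem norm_rootAt (hw : w ∈ Solenoid P) (n m : ℕ) : ‖rootAt P w n m‖ = 1 := by
  simp [rootAt, hw.1]

theorem rootAt_pow (hw : w ∈ Solenoid P) {n m : ℕ} (hnm : n ≤ m) (hm : P m = k) :
    rootAt P w n m ^ k = w n := by
  rw [rootAt, ← pow_mul, ← hm, ← prod_Ico_succ_top hnm,
    ← eq_pow_prod hw (hnm.trans m.le_succ)]

theorem rootAt_succ {n m : ℕ} (hnm : n < m) : rootAt P w n m = rootAt P w (n + 1) m ^ P n := by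
  rw [rootAt, rootAt, ← pow_mul, prod_eq_prod_Ico_succ_bot hnm, mul_comm]

theorem rootAt_eq_of_le (hw : w ∈ Solenoid P) {n m m' : ℕ} (hnm : n ≤ m) (hmm' : m ≤ m')
    (hm : P m = k) (hm' : P m' = k) : rootAt P w n m = rootAt P w n m' := by
  rcases hmm'.eq_or_lt with rfl | hlt
  · rfl
  have hprod :
      (∏ i ∈ Ico (m + 1) (m' + 1), P i) * ∏ i ∈ Ico n m, P i = ∏ i ∈ Ico n m', P i := by
    rw [prod_Ico_succ_top hlt, ← prod_Ico_consecutive _ hnm hmm',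
      prod_eq_prod_Ico_succ_bot hlt, hm, hm']
    ring
  rw [rootAt, eq_pow_prod hw (Nat.succ_le_succ hmm'), ← pow_mul, hprod, rootAt]

theorem rootAt_eq (hw : w ∈ Solenoid P) {n m m' : ℕ} (hnm : n ≤ m) (hnm' : n ≤ m')
    (hm : P m = k) (hm' : P m' = k) : rootAt P w n m = rootAt P w n m' := by
  rcases le_total m m' with h | h
  · exact rootAt_eq_of_le hw hnm h hm hm'
  · exact (rootAt_eq_of_le hw hnm' h hm' hm).symm

theorem hpow_surjOn (hinf : {n | P n = k}.Infinite) :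
    Set.SurjOn (hpow k) (Solenoid P) (Solenoid P) := by
  intro w hw
  choose m hm hnm using fun n => hinf.exists_gt n
  refine ⟨fun n => rootAt P w n (m n), ⟨fun n => norm_rootAt hw n (m n), fun n => ?_⟩,
    funext fun n => rootAt_pow hw (hnm n).le (hm n)⟩
  have hn : n + 1 < m (n + 1) := hnm (n + 1)
  calc rootAt P w n (m n) = rootAt P w n (m (n + 1)) :=
        rootAt_eq hw (hnm n).le (by omega) (hm n) (hm (n + 1))
    _ = rootAt P w (n + 1) (m (n + 1)) ^ P n := rootAt_succ (by omega)

theorem hpow_bijOn (hinf : {n | P n = k}.Infinite) :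
    Set.BijOn (hpow k) (Solenoid P) (Solenoid P) :=
  ⟨hpow_mapsTo k, hpow_injOn hinf, hpow_surjOn hinf⟩

end Solenoid

theorem stmt_5_general (P : ℕ → ℕ) (k : ℕ)
    (hinf : {n | P n = k}.Infinite) :
    Set.BijOn (hpow k) (Solenoid P) (Solenoid P) ∧
    (∀ z w : ℕ → ℂ, hpow k (z * w) = hpow k z * hpow k w) ∧
    ∃ e : Solenoid P ≃ₜ Solenoid P,
      ∀ z : Solenoid P, (e z : ℕ → ℂ) = hpow k (z : ℕ → ℂ) := by
  have hbij := Solenoid.hpow_bijOn hinf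
  exact ⟨hbij, hpow_mul k,
    hbij.exists_homeomorph (Solenoid.isCompact P) (continuous_hpow k).continuousOn⟩

/-- If the prime `k` occurs infinitely often in `P`, then the coordinatewise
`k`-th power map is a bijection of the solenoid onto itself, indeed a
topological group automorphism. -/
theorem stmt_5 (P : ℕ → ℕ) (hP : ∀ n, (P n).Prime) (k : ℕ) (hk : k.Prime)
    (hinf : {n | P n = k}.Infinite) :
    Set.BijOn (hpow k) (Solenoid P) (Solenoid P) ∧
    (∀ z w : ℕ → ℂ, hpow k (z * w) = hpow k z * hpow k w) ∧
    ∃ e : Solenoid P ≃ₜ Solenoid P,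
      ∀ z : Solenoid P, (e z : ℕ → ℂ) = hpow k (z : ℕ → ℂ) :=
  stmt_5_general P k hinf
end

section
/- Let P : ℕ → ℕ be a sequence of primes, q a prime with q ≠ P j for all j ≥ n₀, and k ≥ 2 with gcd(k, q) = 1. Then for every m ≥ 1 there exists a point ζ ∈ Σ_P whose n₀-th coordinate is any prescribed q^m-th root of unity, such that ζ^(q^m) = e; consequently ζ satisfies (h_P^k)^(q^(m-1)(q-1))(ζ) = ζ, i.e., ζ is a periodic point of h_P^k of period dividing φ(q^m). -/
/-!
A `d`-th root of unity `ξ` is extended to a point of the solenoid by setting `ζ n = ξ ^ b n`.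
Below `n₀` the exponent is the forward product `∏_{n ≤ j < n₀} P j`; from `n₀` on the
`P j` are units mod `d`, and `(∏_{n₀ ≤ j < n} P j) ^ (φ d - 1)` is the inverse of that
product mod `d` by Euler's theorem. Every coordinate is then a `d`-th root of unity, so
`k ^ φ d ≡ 1 [MOD d]` makes `ζ` a fixed point of `(h^k)^[φ d]`.
-/

open Finset

lemma hpow_iterate (k r : ℕ) (z : ℕ → ℂ) : (hpow k)^[r] z = fun n => z n ^ k ^ r := by
  induction r generalizing z with
  | zero => simp
  | succ r ih =>
    rw [Function.iterate_succ_apply, ih]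
    simp only [hpow, ← pow_mul, pow_succ']

lemma hpow_iterate_totient_eq_self {d k : ℕ} (hk : k.Coprime d) {z : ℕ → ℂ}
    (hz : ∀ n, z n ^ d = 1) : (hpow k)^[d.totient] z = z := by
  rw [hpow_iterate]
  funext n
  simpa using pow_eq_pow_of_modEq (Nat.ModEq.pow_totient hk) (hz n)

def solenoidExponent (P : ℕ → ℕ) (n₀ d n : ℕ) : ℕ :=
  (∏ j ∈ Ico n n₀, P j) * (∏ j ∈ Ico n₀ n, P j) ^ (d.totient - 1)

lemma solenoidExponent_self (P : ℕ → ℕ) (n₀ d : ℕ) : solenoidExponent P n₀ d n₀ = 1 := by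
  simp [solenoidExponent]

lemma solenoidExponent_modEq {P : ℕ → ℕ} {n₀ d : ℕ} (hd : 0 < d)
    (hP : ∀ j, n₀ ≤ j → (P j).Coprime d) (n : ℕ) :
    solenoidExponent P n₀ d n ≡ solenoidExponent P n₀ d (n + 1) * P n [MOD d] := by
  unfold solenoidExponent
  rcases lt_or_ge n n₀ with hn | hn
  · rw [Ico_eq_empty (by omega : ¬n₀ < n), Ico_eq_empty (by omega : ¬n₀ < n + 1),
      prod_eq_prod_Ico_succ_bot hn, prod_empty, one_pow, mul_one, mul_one, mul_comm (P n)]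
  · rw [Ico_eq_empty (by omega : ¬n < n₀), Ico_eq_empty (by omega : ¬n + 1 < n₀),
      prod_Ico_succ_top hn, prod_empty, one_mul, one_mul]
    set Q := ∏ j ∈ Ico n₀ n, P j
    have htot : d.totient - 1 + 1 = d.totient := Nat.sub_add_cancel (Nat.totient_pos.mpr hd)
    calc Q ^ (d.totient - 1) = Q ^ (d.totient - 1) * 1 := (mul_one _).symm
      _ ≡ Q ^ (d.totient - 1) * P n ^ d.totient [MOD d] :=
          Nat.ModEq.mul_left _ (Nat.ModEq.pow_totient (hP n hn)).symm
      _ = (Q * P n) ^ (d.totient - 1) * P n := by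
          rw [← htot, Nat.add_sub_cancel]; ring

lemma exists_mem_solenoid_of_pow_eq_one {P : ℕ → ℕ} {n₀ d : ℕ} (hd : 0 < d)
    (hP : ∀ j, n₀ ≤ j → (P j).Coprime d) {ξ : ℂ} (hξ : ξ ^ d = 1) :
    ∃ ζ ∈ Solenoid P, ζ n₀ = ξ ∧ ∀ n, ζ n ^ d = 1 := by
  set ζ : ℕ → ℂ := fun n => ξ ^ solenoidExponent P n₀ d n
  have hζ : ∀ n, ζ n ^ d = 1 := fun n => by
    rw [← pow_mul, mul_comm, pow_mul, hξ, one_pow]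
  refine ⟨ζ, ⟨fun n => Complex.norm_eq_one_of_pow_eq_one (hζ n) hd.ne', fun n => ?_⟩,
    by simp [ζ, solenoidExponent_self], hζ⟩
  rw [← pow_mul]
  exact pow_eq_pow_of_modEq (solenoidExponent_modEq hd hP n) hξ

theorem stmt_13_general (P : ℕ → ℕ) (hP : ∀ n, (P n).Prime) (q : ℕ) (hq : q.Prime)
    (n₀ : ℕ) (hqP : ∀ j, n₀ ≤ j → P j ≠ q)
    (k : ℕ) (hco : Nat.gcd k q = 1) (m : ℕ) (hm : 1 ≤ m) :
    ∀ ξ : ℂ, ξ ^ (q ^ m) = 1 →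
      ∃ ζ ∈ Solenoid P, ζ n₀ = ξ ∧ (∀ n, ζ n ^ (q ^ m) = 1) ∧
        (hpow k)^[q ^ (m - 1) * (q - 1)] ζ = ζ := by
  intro ξ hξ
  have hPq : ∀ j, n₀ ≤ j → (P j).Coprime (q ^ m) := fun j hj =>
    ((Nat.coprime_primes (hP j) hq).mpr (hqP j hj)).pow_right m
  obtain ⟨ζ, hζP, hζn₀, hζ⟩ := exists_mem_solenoid_of_pow_eq_one (pow_pos hq.pos m) hPq hξ
  refine ⟨ζ, hζP, hζn₀, hζ, ?_⟩
  rw [← Nat.totient_prime_pow hq hm]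
  exact hpow_iterate_totient_eq_self (Nat.Coprime.pow_right m hco) hζ

/-- If the prime `q` does not occur in `P` from index `n₀` on and `gcd(k,q)=1`,
then every `q^m`-th root of unity is the `n₀`-th coordinate of a point `ζ` of the
solenoid with `ζ ^ q^m = e`, and `ζ` is a periodic point of `h_P^k` of period
dividing `φ(q^m) = q^(m-1) * (q-1)`. -/
theorem stmt_13 (P : ℕ → ℕ) (hP : ∀ n, (P n).Prime) (q : ℕ) (hq : q.Prime)
    (n₀ : ℕ) (hqP : ∀ j, n₀ ≤ j → P j ≠ q)
    (k : ℕ) (hk : 2 ≤ k) (hco : Nat.gcd k q = 1) (m : ℕ) (hm : 1 ≤ m) :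
    ∀ ξ : ℂ, ξ ^ (q ^ m) = 1 →
      ∃ ζ ∈ Solenoid P, ζ n₀ = ξ ∧ (∀ n, ζ n ^ (q ^ m) = 1) ∧
        (hpow k)^[q ^ (m - 1) * (q - 1)] ζ = ζ :=
  stmt_13_general P hP q hq n₀ hqP k hco m hm
end

section
/- Let P : ℕ → ℕ be a sequence of primes with S(P) = {q₁,…,q_t} nonempty and finite, and let k be a positive integer divisible by q₁·q₂⋯q_t. Then the identity e is the only periodic point of h_P^k on Σ_P. -/
lemma hpow_iterate_apply (k m : ℕ) (z : ℕ → ℂ) (n : ℕ) : (hpow k)^[m] z n = z n ^ k ^ m := by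
  induction m generalizing z with
  | zero => simp
  | succ m ih => rw [Function.iterate_succ_apply, ih, hpow, ← pow_mul, pow_succ']

section OrderOfRoots

variable {G : Type*} [Monoid G]

lemma mul_orderOf_pow_self_dvd_orderOf {y : G} {q : ℕ} (hq : q ∣ orderOf (y ^ q)) :
    q * orderOf (y ^ q) ∣ orderOf y := by
  obtain ⟨c, hc⟩ := hq.trans (orderOf_pow_dvd q)
  have hc' : orderOf (y ^ q) ∣ c :=
    orderOf_dvd_of_pow_eq_one (by rw [← pow_mul, ← hc, pow_orderOf_eq_one])
  simpa [hc] using Nat.mul_dvd_mul_left q hc'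

variable {P : ℕ → ℕ} {z : ℕ → G}

lemma orderOf_dvd_orderOf_of_le (hz : ∀ n, z n = z (n + 1) ^ P n) {a b : ℕ} (hab : a ≤ b) :
    orderOf (z a) ∣ orderOf (z b) := by
  induction b, hab using Nat.le_induction with
  | base => rfl
  | succ b _ ih => exact ih.trans (hz b ▸ orderOf_pow_dvd _)

lemma exists_pow_dvd_orderOf (hz : ∀ n, z n = z (n + 1) ^ P n) {q : ℕ}
    (hq : {n | P n = q}.Infinite) {n₀ : ℕ} (hqn₀ : q ∣ orderOf (z n₀)) (j : ℕ) :
    ∃ n, q ^ (j + 1) ∣ orderOf (z n) := by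
  induction j with
  | zero => exact ⟨n₀, by simpa using hqn₀⟩
  | succ j ih =>
    obtain ⟨n, hn⟩ := ih
    obtain ⟨n', hPn' : P n' = q, hnn'⟩ := hq.exists_gt n
    have hn' : q ^ (j + 1) ∣ orderOf (z n') := hn.trans (orderOf_dvd_orderOf_of_le hz hnn'.le)
    have hzn' : z n' = z (n' + 1) ^ q := hPn' ▸ hz n'
    have hqn' : q ∣ orderOf (z (n' + 1) ^ q) :=
      hzn' ▸ (dvd_pow_self q j.succ_ne_zero).trans hn'
    refine ⟨n' + 1, ?_⟩
    calc q ^ (j + 1 + 1) = q * q ^ (j + 1) := pow_succ' q (j + 1)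
      _ ∣ q * orderOf (z (n' + 1) ^ q) := hzn' ▸ Nat.mul_dvd_mul_left q hn'
      _ ∣ orderOf (z (n' + 1)) := mul_orderOf_pow_self_dvd_orderOf hqn'

theorem finite_setOf_eq_of_dvd_orderOf (hz : ∀ n, z n = z (n + 1) ^ P n) {N : ℕ} (hN : N ≠ 0)
    (hzN : ∀ n, z n ^ N = 1) {q : ℕ} (hq : 1 < q) {n₀ : ℕ} (hqn₀ : q ∣ orderOf (z n₀)) :
    {n | P n = q}.Finite := by
  by_contra hinf
  obtain ⟨n, hn⟩ := exists_pow_dvd_orderOf hz hinf hqn₀ N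
  have hle : q ^ (N + 1) ≤ N :=
    Nat.le_of_dvd (Nat.pos_of_ne_zero hN) (hn.trans (orderOf_dvd_of_pow_eq_one (hzN n)))
  have hlt : N < q ^ (N + 1) := (Nat.lt_pow_self hq).trans (Nat.pow_lt_pow_right hq N.lt_succ_self)
  omega

end OrderOfRoots

lemma pow_sub_one_eq_one_of_pow_eq_self {M₀ : Type*} [MonoidWithZero M₀] [IsRightCancelMulZero M₀]
    {x : M₀} (hx : x ≠ 0) {M : ℕ} (hM : 0 < M) (h : x ^ M = x) : x ^ (M - 1) = 1 := by
  rw [← Nat.sub_add_cancel hM, pow_succ] at h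
  exact (mul_eq_right₀ hx).mp h

lemma coprime_pow_sub_one_self {k m : ℕ} (hk : 0 < k) (hm : m ≠ 0) : (k ^ m - 1).Coprime k := by
  have h : (k ^ m - 1).Coprime (k ^ m) :=
    (Nat.coprime_self_sub_left (Nat.one_le_pow m k hk)).mpr (Nat.coprime_one_left _)
  exact h.coprime_dvd_right (dvd_pow_self k hm)

theorem stmt_15_general (P : ℕ → ℕ) (k : ℕ) (hk : 0 < k)
    (hne : {q : ℕ | q.Prime ∧ {n | P n = q}.Finite}.Nonempty)
    (hdvd : ∀ q ∈ {q : ℕ | q.Prime ∧ {n | P n = q}.Finite}, q ∣ k) :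
    ∀ z ∈ Solenoid P, (∃ m : ℕ, 1 ≤ m ∧ (hpow k)^[m] z = z) → z = 1 := by
  rintro z ⟨hnorm, hz⟩ ⟨m, hm, hper⟩
  obtain ⟨q₀, hq₀⟩ := hne
  have hk2 : 2 ≤ k := hq₀.1.two_le.trans (Nat.le_of_dvd hk (hdvd q₀ hq₀))
  have hN : k ^ m - 1 ≠ 0 := Nat.sub_ne_zero_of_lt (Nat.one_lt_pow (by omega : m ≠ 0) hk2)
  have hzN (n : ℕ) : z n ^ (k ^ m - 1) = 1 := by
    refine pow_sub_one_eq_one_of_pow_eq_self (norm_ne_zero_iff.mp (by simp [hnorm n]))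
      (pow_pos hk m) ?_
    rw [← hpow_iterate_apply, hper]
  funext n
  by_contra hn
  obtain ⟨q, hq, hqn⟩ := Nat.exists_prime_and_dvd (mt orderOf_eq_one_iff.mp hn)
  have hqk : q ∣ k :=
    hdvd q ⟨hq, finite_setOf_eq_of_dvd_orderOf hz hN hzN hq.one_lt hqn⟩
  have hcop : q.Coprime k :=
    (coprime_pow_sub_one_self hk (by omega)).coprime_dvd_left
      (hqn.trans (orderOf_dvd_of_pow_eq_one (hzN n)))
  exact hq.one_lt.ne' (hcop.eq_one_of_dvd hqk)

/-- If the set `S(P)` of primes occurring only finitely often in `P` is nonempty and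
finite and every member of `S(P)` divides `k`, then the identity is the only periodic
point of the coordinatewise `k`-th power map. -/
theorem stmt_15 (P : ℕ → ℕ) (hP : ∀ n, (P n).Prime) (k : ℕ) (hk : 0 < k)
    (hfin : {q : ℕ | q.Prime ∧ {n | P n = q}.Finite}.Finite)
    (hne : {q : ℕ | q.Prime ∧ {n | P n = q}.Finite}.Nonempty)
    (hdvd : ∀ q ∈ {q : ℕ | q.Prime ∧ {n | P n = q}.Finite}, q ∣ k) :
    ∀ z ∈ Solenoid P, (∃ m : ℕ, 1 ≤ m ∧ (hpow k)^[m] z = z) → z = 1 :=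
  stmt_15_general P k hk hne hdvd
end

section
/- Let P : ℕ → ℕ be a sequence of primes with S(P) nonempty and finite, and let k ≥ 2 be a positive integer not divisible by some q ∈ S(P). Then the set of periodic points of h_P^k is dense in Σ_P. -/
/-!
A point of the solenoid all of whose coordinates are `q ^ M`-th roots of unity is periodic for
the `k`-th power map, because `k ^ φ (q ^ M) ≡ 1 [MOD q ^ M]` when `q ∤ k`. Such points are dense:
approximate coordinate `N` of a given point by a `q ^ J`-th root of unity (the coordinates below
`N` are powers of it, so they are approximated too) and extend upwards by successive `P n`-th
roots. For `P n ≠ q` the root can be taken among the `q`-power roots of unity without raising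
the order, since `P n` is invertible modulo `q ^ M`; each `P n = q` multiplies the order by `q`,
and this happens only finitely often since `q ∈ S(P)`.
-/

open Finset Filter Topology
open scoped Nat

lemma pow_eq_self_of_modEq_one {M : Type*} [Monoid M] {x : M} {n a : ℕ} (hx : x ^ n = 1)
    (ha : a ≡ 1 [MOD n]) : x ^ a = x := by
  rw [pow_eq_pow_mod a hx, ha, ← pow_eq_pow_mod 1 hx, pow_one]

lemma norm_pow_sub_pow_le {R : Type*} [SeminormedRing R] [NormOneClass R] {a b : R}
    (ha : ‖a‖ ≤ 1) (hb : ‖b‖ ≤ 1) (n : ℕ) : ‖a ^ n - b ^ n‖ ≤ n * ‖a - b‖ := by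
  induction n with
  | zero => simp
  | succ n ih =>
    have hbn : ‖b ^ n‖ ≤ 1 := (norm_pow_le b n).trans (pow_le_one₀ (norm_nonneg b) hb)
    calc ‖a ^ (n + 1) - b ^ (n + 1)‖ = ‖a * (a ^ n - b ^ n) + (a - b) * b ^ n‖ := by
          rw [pow_succ', pow_succ']; congr 1; noncomm_ring
      _ ≤ ‖a‖ * ‖a ^ n - b ^ n‖ + ‖a - b‖ * ‖b ^ n‖ :=
          (norm_add_le _ _).trans (add_le_add (norm_mul_le _ _) (norm_mul_le _ _))
      _ ≤ 1 * (n * ‖a - b‖) + ‖a - b‖ * 1 := by gcongr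
      _ = (n + 1 : ℕ) * ‖a - b‖ := by push_cast; ring

lemma mem_closure_of_forall_dist_lt {E : Type*} [PseudoMetricSpace E] {x : ℕ → E}
    {T : Set (ℕ → E)} (h : ∀ N : ℕ, ∀ ε > 0, ∃ y ∈ T, ∀ n ≤ N, dist (y n) (x n) < ε) :
    x ∈ closure T := by
  rw [mem_closure_iff_nhds]
  intro V hV
  rw [nhds_pi] at hV
  obtain ⟨⟨I, r⟩, ⟨hI, hr⟩, hIV⟩ :=
    (hasBasis_pi fun n => Metric.nhds_basis_ball (x := x n)).mem_iff.mp hV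
  obtain ⟨N, hN⟩ := hI.bddAbove
  have hsmall : ∀ᶠ ε in 𝓝[>] 0, ∀ i ∈ I, ε < r i := (eventually_all_finite hI).2
    fun i hi => eventually_nhdsWithin_of_eventually_nhds (eventually_lt_nhds (hr i hi))
  obtain ⟨ε, hεr, hε⟩ := (hsmall.and self_mem_nhdsWithin).exists
  obtain ⟨y, hyT, hy⟩ := h N ε hε
  exact ⟨y, hIV fun i hi => (hy i (hN hi)).trans (hεr i hi), hyT⟩

lemma iterate_hpow (k m : ℕ) (z : ℕ → ℂ) : (hpow k)^[m] z = fun n => z n ^ k ^ m := by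
  induction m generalizing z with
  | zero => simp
  | succ m ih =>
    rw [Function.iterate_succ_apply, ih]
    funext n
    simp only [hpow, ← pow_mul, pow_succ']

lemma iterate_hpow_totient {k q M : ℕ} (hk : k.Coprime q) {z : ℕ → ℂ}
    (hz : ∀ n, z n ^ q ^ M = 1) : (hpow k)^[φ (q ^ M)] z = z := by
  rw [iterate_hpow]
  funext n
  exact pow_eq_self_of_modEq_one (hz n) (Nat.ModEq.pow_totient (hk.pow_right M))

lemma Complex.exists_pow_pow_eq_one_norm_sub_lt {q : ℕ} (hq : 1 < q) {x : ℂ} (hx : ‖x‖ = 1)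
    {δ : ℝ} (hδ : 0 < δ) : ∃ J : ℕ, ∃ w : ℂ, w ^ q ^ J = 1 ∧ ‖w - x‖ < δ := by
  obtain ⟨J, hJ⟩ := pow_unbounded_of_one_lt (Real.pi / δ) (Nat.one_lt_cast.2 hq : (1 : ℝ) < q)
  have hqJ : (0 : ℝ) < (q : ℝ) ^ J := by positivity
  have hq0 : (q : ℂ) ≠ 0 := Nat.cast_ne_zero.2 (by omega)
  set b := round ((q : ℝ) ^ J * x.arg / (2 * Real.pi))
  set θ := 2 * Real.pi * b / (q : ℝ) ^ J
  refine ⟨J, Complex.exp (Complex.I * θ), ?_, ?_⟩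
  · rw [← Complex.exp_nat_mul]
    convert Complex.exp_int_mul_two_pi_mul_I b using 2
    simp only [θ]
    push_cast
    field_simp
  · have hxarg : Complex.exp (Complex.I * x.arg) = x := by
      conv_rhs => rw [← Complex.norm_mul_exp_arg_mul_I x, hx]
      simp [mul_comm]
    have hθ : |θ - x.arg| ≤ Real.pi / (q : ℝ) ^ J := by
      have : θ - x.arg =
          2 * Real.pi / (q : ℝ) ^ J * (b - (q : ℝ) ^ J * x.arg / (2 * Real.pi)) := by
        simp only [θ]; field_simp
      rw [this, abs_mul, abs_of_pos (by positivity), abs_sub_comm]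
      calc 2 * Real.pi / (q : ℝ) ^ J * |(q : ℝ) ^ J * x.arg / (2 * Real.pi) - b|
          ≤ 2 * Real.pi / (q : ℝ) ^ J * (1 / 2) := by gcongr; exact abs_sub_round _
        _ = Real.pi / (q : ℝ) ^ J := by ring
    have hrot : x * Complex.exp (Complex.I * (θ - x.arg : ℝ)) = Complex.exp (Complex.I * θ) := by
      conv_lhs => arg 1; rw [← hxarg]
      rw [← Complex.exp_add]
      push_cast
      ring_nf
    calc ‖Complex.exp (Complex.I * θ) - x‖
        = ‖x * (Complex.exp (Complex.I * (θ - x.arg : ℝ)) - 1)‖ := by rw [mul_sub_one, hrot]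
      _ ≤ |θ - x.arg| := by
          rw [norm_mul, hx, one_mul]; exact Real.norm_exp_I_mul_ofReal_sub_one_le
      _ ≤ Real.pi / (q : ℝ) ^ J := hθ
      _ < δ := by rwa [div_lt_iff₀ hqJ, mul_comm, ← div_lt_iff₀ hδ]

/-- For `p ≠ q`, `p ^ (φ (q ^ M) - 1)` inverts `p` modulo `q ^ M`, so this is a `p`-th root of
every `q ^ M`-th root of unity `w` and again such a root of unity. -/
noncomputable def torsionRoot (q M p : ℕ) (w : ℂ) : ℂ :=
  if p = q then w ^ (q⁻¹ : ℂ) else w ^ p ^ (φ (q ^ M) - 1)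

lemma torsionRoot_pow {q M p : ℕ} (hq : q.Prime) (hp : p.Prime) {w : ℂ} (hw : w ^ q ^ M = 1) :
    torsionRoot q M p w ^ p = w := by
  unfold torsionRoot
  split_ifs with hpq
  · subst hpq
    exact Complex.cpow_nat_inv_pow w hp.ne_zero
  · have hcop : p.Coprime (q ^ M) := ((Nat.coprime_primes hp hq).2 hpq).pow_right M
    have htot : p ^ (φ (q ^ M) - 1) * p = p ^ φ (q ^ M) := by
      rw [← pow_succ, Nat.sub_add_cancel (Nat.totient_pos.2 (pow_pos hq.pos M))]
    rw [← pow_mul, htot]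
    exact pow_eq_self_of_modEq_one hw (Nat.ModEq.pow_totient hcop)

lemma torsionRoot_pow_pow_eq_one {q M p m : ℕ} (hq : q ≠ 0) {w : ℂ} (hw : w ^ q ^ m = 1) :
    torsionRoot q M p w ^ q ^ (m + if p = q then 1 else 0) = 1 := by
  unfold torsionRoot
  split_ifs
  · rw [pow_succ', pow_mul, Complex.cpow_nat_inv_pow w hq, hw]
  · rw [add_zero, pow_right_comm, hw, one_pow]

noncomputable def torsionLift (P : ℕ → ℕ) (q M : ℕ) (w₀ : ℂ) : ℕ → ℂ
  | 0 => w₀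
  | i + 1 => torsionRoot q M (P i) (torsionLift P q M w₀ i)

lemma torsionLift_pow_eq_one (P : ℕ → ℕ) {q : ℕ} (hq : q ≠ 0) (M : ℕ) {w₀ : ℂ} {J : ℕ}
    (hw₀ : w₀ ^ q ^ J = 1) (i : ℕ) :
    torsionLift P q M w₀ i ^ q ^ (J + Nat.count (fun j => P j = q) i) = 1 := by
  induction i with
  | zero => exact hw₀
  | succ i ih =>
    rw [Nat.count_succ, ← add_assoc]
    exact torsionRoot_pow_pow_eq_one hq ih

lemma exists_torsion_lift {P : ℕ → ℕ} (hP : ∀ n, (P n).Prime) {q : ℕ} (hq : q.Prime)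
    (hfin : {n | P n = q}.Finite) {w₀ : ℂ} {J : ℕ} (hw₀ : w₀ ^ q ^ J = 1) :
    ∃ u : ℕ → ℂ, u 0 = w₀ ∧ (∀ i, u i = u (i + 1) ^ P i) ∧ ∃ M, ∀ i, u i ^ q ^ M = 1 := by
  set M := J + #hfin.toFinset
  have hM : ∀ i, torsionLift P q M w₀ i ^ q ^ M = 1 := fun i => by
    obtain ⟨t, ht⟩ : q ^ (J + Nat.count (fun j => P j = q) i) ∣ q ^ M :=
      pow_dvd_pow q (by have := Nat.count_le_card hfin i; omega)
    rw [ht, pow_mul, torsionLift_pow_eq_one P hq.ne_zero M hw₀, one_pow]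
  exact ⟨torsionLift P q M w₀, rfl, fun i => (torsionRoot_pow hq (hP i) (hM i)).symm, M, hM⟩

namespace Solenoid

lemma eq_pow_prod_Ico {P : ℕ → ℕ} {z : ℕ → ℂ} (hz : z ∈ Solenoid P) {a b : ℕ} (hab : a ≤ b) :
    z a = z b ^ ∏ j ∈ Ico a b, P j := by
  induction b, hab using Nat.le_induction with
  | base => simp
  | succ b hab ih => rw [prod_Ico_succ_top hab, pow_mul', ← hz.2 b, ih]

def extendBelow (P : ℕ → ℕ) (N : ℕ) (u : ℕ → ℂ) : ℕ → ℂ :=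
  fun n => u (n - N) ^ ∏ j ∈ Ico n N, P j

lemma extendBelow_mem {P : ℕ → ℕ} {N : ℕ} {u : ℕ → ℂ} (hu1 : ∀ i, ‖u i‖ = 1)
    (hu : ∀ i, u i = u (i + 1) ^ P (N + i)) : extendBelow P N u ∈ Solenoid P := by
  refine ⟨fun n => by simp [extendBelow, norm_pow, hu1], fun n => ?_⟩
  simp only [extendBelow]
  rcases lt_or_ge n N with hn | hn
  · rw [prod_eq_prod_Ico_succ_bot hn, pow_mul', Nat.sub_eq_zero_of_le hn.le,
      Nat.sub_eq_zero_of_le hn]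
  · rw [Ico_eq_empty_of_le hn, Ico_eq_empty_of_le (by omega), prod_empty, pow_one, pow_one,
      hu (n - N), Nat.add_sub_cancel' hn, Nat.sub_add_comm hn]

lemma exists_torsion_near {P : ℕ → ℕ} (hP : ∀ n, (P n).Prime) {q : ℕ} (hq : q.Prime)
    (hfin : {n | P n = q}.Finite) {x : ℕ → ℂ} (hx : x ∈ Solenoid P) (N : ℕ) {ε : ℝ}
    (hε : 0 < ε) :
    ∃ w ∈ Solenoid P, (∃ M, ∀ n, w n ^ q ^ M = 1) ∧ ∀ n ≤ N, dist (w n) (x n) < ε := by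
  set B := ∏ j ∈ range N, P j
  have hB : (0 : ℝ) < B := Nat.cast_pos.2 (prod_pos fun j _ => (hP j).pos)
  obtain ⟨J, w₀, hw₀, hw₀x⟩ :=
    Complex.exists_pow_pow_eq_one_norm_sub_lt hq.one_lt (hx.1 N) (div_pos hε hB)
  obtain ⟨u, rfl, hu, M, huM⟩ := exists_torsion_lift (fun n => hP (N + n)) hq
    (hfin.preimage (add_right_injective N).injOn) hw₀
  have hu1 : ∀ i, ‖u i‖ = 1 := fun i =>
    Complex.norm_eq_one_of_pow_eq_one (huM i) (pow_ne_zero M hq.ne_zero)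
  refine ⟨extendBelow P N u, extendBelow_mem hu1 hu,
    ⟨M, fun n => by rw [extendBelow, pow_right_comm, huM, one_pow]⟩, fun n hn => ?_⟩
  have hprod : ∏ j ∈ Ico n N, P j ≤ B := prod_le_prod_of_subset_of_one_le'
    (fun j hj => mem_range.2 (mem_Ico.1 hj).2) fun j _ _ => (hP j).one_lt.le
  calc dist (extendBelow P N u n) (x n)
      = ‖u 0 ^ ∏ j ∈ Ico n N, P j - x N ^ ∏ j ∈ Ico n N, P j‖ := by
        rw [dist_eq_norm, extendBelow, Nat.sub_eq_zero_of_le hn, ← eq_pow_prod_Ico hx hn]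
    _ ≤ (∏ j ∈ Ico n N, P j : ℕ) * ‖u 0 - x N‖ :=
        norm_pow_sub_pow_le (hu1 0).le (hx.1 N).le _
    _ ≤ B * ‖u 0 - x N‖ := by gcongr
    _ < B * (ε / B) := by gcongr
    _ = ε := mul_div_cancel₀ ε hB.ne'

end Solenoid

theorem stmt_16_general (P : ℕ → ℕ) (hP : ∀ n, (P n).Prime) (k : ℕ)
    (hq : ∃ q ∈ {q : ℕ | q.Prime ∧ {n | P n = q}.Finite}, ¬ q ∣ k) :
    Dense {z : Solenoid P | ∃ m : ℕ, 1 ≤ m ∧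
      (hpow k)^[m] (z : ℕ → ℂ) = (z : ℕ → ℂ)} := by
  obtain ⟨q, ⟨hq, hfin⟩, hqk⟩ := hq
  have hkq : k.Coprime q := ((Nat.Prime.coprime_iff_not_dvd hq).2 hqk).symm
  refine fun x => closure_subtype.2 (mem_closure_of_forall_dist_lt fun N ε hε => ?_)
  obtain ⟨w, hw, ⟨M, hwM⟩, hwx⟩ := Solenoid.exists_torsion_near hP hq hfin x.2 N hε
  exact ⟨w, ⟨⟨w, hw⟩, ⟨φ (q ^ M), Nat.totient_pos.2 (pow_pos hq.pos M),
    iterate_hpow_totient hkq hwM⟩, rfl⟩, hwx⟩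

/-- If `S(P)` is nonempty and finite and some `q ∈ S(P)` does not divide `k ≥ 2`,
then the periodic points of the coordinatewise `k`-th power map are dense. -/
theorem stmt_16 (P : ℕ → ℕ) (hP : ∀ n, (P n).Prime) (k : ℕ) (hk : 2 ≤ k)
    (hfin : {q : ℕ | q.Prime ∧ {n | P n = q}.Finite}.Finite)
    (hne : {q : ℕ | q.Prime ∧ {n | P n = q}.Finite}.Nonempty)
    (hq : ∃ q ∈ {q : ℕ | q.Prime ∧ {n | P n = q}.Finite}, ¬ q ∣ k) :
    Dense {z : Solenoid P | ∃ m : ℕ, 1 ≤ m ∧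
      (hpow k)^[m] (z : ℕ → ℂ) = (z : ℕ → ℂ)} :=
  stmt_16_general P hP k hq
end
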